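/- arXiv:1003.3821 — 4 statements merged into one kernel-verified Lean document; each statement's English description precedes it below -/
import Mathlib

section
/- If P is a finite poc-set and u, v, w are vertices of Γ(P), then m = (u ∩ v) ∪ (v ∩ w) ∪ (u ∩ w) is again a vertex of Γ(P) (i.e., a coherent *-selection). -/
structure PocSet (P : Type*) [PartialOrder P] where
  zero : P
  zero_le : ∀ a : P, zero ≤ a
  star : P → P
  star_star : ∀ a : P, star (star a) = a
  star_anti : ∀ a b : P, a ≤ b → star b ≤ star a
  eq_zero_of_le_star : ∀ a : P, a ≤ star a → a = zero

namespace PocSet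

variable {P : Type*} [PartialOrder P]

/-- The maximum element `1 = 0*` of a poc-set. -/
def one (S : PocSet P) : P := S.star S.zero

/-- An element is proper if it is neither `0` nor `1`. -/
def Proper (S : PocSet P) (a : P) : Prop := a ≠ S.zero ∧ a ≠ S.one

/-- A subset is coherent if `a ≤ b*` holds for no two of its members. -/
def Coherent (S : PocSet P) (α : Set P) : Prop := ∀ a ∈ α, ∀ b ∈ α, ¬ a ≤ S.star b

/-- A vertex of `Γ(P)`: a coherent `*`-selection. -/
def IsVertex (S : PocSet P) (α : Set P) : Prop :=
  S.Coherent α ∧ ∀ a : P, a ∈ α ↔ S.star a ∉ α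

/-- The metric `Δ(u,v) = |u Δ v| / 2` on vertices. -/
noncomputable def delta (S : PocSet P) (u v : Set P) : ℝ :=
  ((symmDiff u v).ncard : ℝ) / 2

/-- The median of three sets. -/
def med (u v w : Set P) : Set P := (u ∩ v) ∪ (v ∩ w) ∪ (u ∩ w)

end PocSet

/-- A morphism of poc-sets: sends `0` to `0`, preserves order, commutes with `*`. -/
def IsPocMorphism {P Q : Type*} [PartialOrder P] [PartialOrder Q]
    (S : PocSet P) (T : PocSet Q) (f : P → Q) : Prop :=
  f S.zero = T.zero ∧ (∀ a b : P, a ≤ b → f a ≤ f b) ∧ ∀ a : P, f (S.star a) = T.star (f a)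


/- Each member of the median lies in two of `u, v, w`, so any two members share one of them, which
gives coherence. Complementation and preimage under `*` both commute with the median, which gives
the `*`-selection property. -/

namespace PocSet

section Median

variable {P : Type*}

theorem mem_med_and_mem_med {a b : P} {u v w : Set P} (ha : a ∈ med u v w) (hb : b ∈ med u v w) :
    (a ∈ u ∧ b ∈ u) ∨ (a ∈ v ∧ b ∈ v) ∨ (a ∈ w ∧ b ∈ w) := by
  simp only [med, Set.mem_union, Set.mem_inter_iff] at ha hb
  tauto

theorem compl_med (u v w : Set P) : (med u v w)ᶜ = med uᶜ vᶜ wᶜ := by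
  ext a
  simp only [med, Set.mem_compl_iff, Set.mem_union, Set.mem_inter_iff]
  tauto

theorem preimage_med {Q : Type*} (f : P → Q) (u v w : Set Q) :
    f ⁻¹' med u v w = med (f ⁻¹' u) (f ⁻¹' v) (f ⁻¹' w) := rfl

end Median

variable {P : Type*} [PartialOrder P]

theorem Coherent.med {S : PocSet P} {u v w : Set P} (hu : S.Coherent u) (hv : S.Coherent v)
    (hw : S.Coherent w) : S.Coherent (med u v w) := by
  intro a ha b hb
  rcases mem_med_and_mem_med ha hb with ⟨hau, hbu⟩ | ⟨hav, hbv⟩ | ⟨haw, hbw⟩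
  exacts [hu a hau b hbu, hv a hav b hbv, hw a haw b hbw]

theorem selects_iff_preimage_star_eq_compl (S : PocSet P) (α : Set P) :
    (∀ a : P, a ∈ α ↔ S.star a ∉ α) ↔ S.star ⁻¹' α = αᶜ := by
  simp only [Set.ext_iff, Set.mem_preimage, Set.mem_compl_iff]
  exact forall_congr' fun a => by tauto

theorem IsVertex.preimage_star_eq_compl {S : PocSet P} {α : Set P} (h : S.IsVertex α) :
    S.star ⁻¹' α = αᶜ :=
  (selects_iff_preimage_star_eq_compl S α).1 h.2

end PocSet

theorem stmt6_general {P : Type*} [PartialOrder P] (S : PocSet P)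
    (u v w : Set P) (hu : S.IsVertex u) (hv : S.IsVertex v) (hw : S.IsVertex w) :
    S.IsVertex (PocSet.med u v w) := by
  refine ⟨hu.1.med hv.1 hw.1, (PocSet.selects_iff_preimage_star_eq_compl S _).2 ?_⟩
  rw [PocSet.preimage_med, hu.preimage_star_eq_compl, hv.preimage_star_eq_compl,
    hw.preimage_star_eq_compl, PocSet.compl_med]

theorem stmt6 {P : Type*} [PartialOrder P] [Finite P] (S : PocSet P)
    (u v w : Set P) (hu : S.IsVertex u) (hv : S.IsVertex v) (hw : S.IsVertex w) :
    S.IsVertex (PocSet.med u v w) :=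
  stmt6_general S u v w hu hv hw
end

section
/- If f : P → Q is a morphism of finite poc-sets and v is a vertex of Γ(Q) (a coherent *-selection on Q), then f⁻¹(v) is a vertex of Γ(P); thus the dual map f° : Γ(Q) → Γ(P), f°(v) = f⁻¹(v), is well-defined. -/
namespace PocSet

variable {P Q : Type*} [PartialOrder P] [PartialOrder Q] {S : PocSet P} {T : PocSet Q}
  {f : P → Q} {v : Set Q}

theorem Coherent.preimage (hv : T.Coherent v) (hmono : Monotone f)
    (hstar : ∀ a, f (S.star a) = T.star (f a)) : S.Coherent (f ⁻¹' v) := by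
  intro a ha b hb hab
  exact hv (f a) ha (f b) hb (hstar b ▸ hmono hab)

theorem mem_preimage_iff_star_notMem_of_selection (hv : ∀ b, b ∈ v ↔ T.star b ∉ v)
    (hstar : ∀ a, f (S.star a) = T.star (f a)) (a : P) :
    a ∈ f ⁻¹' v ↔ S.star a ∉ f ⁻¹' v := by
  rw [Set.mem_preimage, Set.mem_preimage, hstar]
  exact hv (f a)

theorem IsVertex.preimage (hv : T.IsVertex v) (hmono : Monotone f)
    (hstar : ∀ a, f (S.star a) = T.star (f a)) : S.IsVertex (f ⁻¹' v) :=
  ⟨hv.1.preimage hmono hstar, mem_preimage_iff_star_notMem_of_selection hv.2 hstar⟩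

end PocSet

theorem stmt9_general {P Q : Type*} [PartialOrder P] [PartialOrder Q]
    (S : PocSet P) (T : PocSet Q) (f : P → Q) (hf : IsPocMorphism S T f)
    (v : Set Q) (hv : T.IsVertex v) :
    S.IsVertex (f ⁻¹' v) :=
  hv.preimage (fun a b => hf.2.1 a b) hf.2.2

theorem stmt9 {P Q : Type*} [PartialOrder P] [PartialOrder Q] [Finite P] [Finite Q]
    (S : PocSet P) (T : PocSet Q) (f : P → Q) (hf : IsPocMorphism S T f)
    (v : Set Q) (hv : T.IsVertex v) :
    S.IsVertex (f ⁻¹' v) :=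
  stmt9_general S T f hf v hv
end

section
/- A morphism f : P → Q of finite poc-sets is surjective if and only if its dual map f° : Γ(Q) → Γ(P), v ↦ f⁻¹(v), is injective. -/
/-!
If `q ∈ Q` is not in the image of `f`, then neither is `q*`, and `q` is proper. Extend the coherent
set `{q} ∪ {a* | a < q}` to a vertex `v`; then `q` is minimal in `v`, so replacing `q` by `q*` gives
another vertex `w ≠ v`. As `f` hits neither `q` nor `q*`, `f⁻¹(v) = f⁻¹(w)`.
-/

namespace PocSet

variable {P : Type*} [PartialOrder P] (S : PocSet P)

lemma le_star_comm {a b : P} : a ≤ S.star b ↔ b ≤ S.star a := by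
  constructor <;> intro h <;> simpa only [S.star_star] using S.star_anti _ _ h

lemma le_one (a : P) : a ≤ S.one := by
  simpa only [one, S.star_star] using S.star_anti _ _ (S.zero_le (S.star a))

lemma star_eq_zero_iff {a : P} : S.star a = S.zero ↔ a = S.one := by
  constructor
  · intro h
    rw [one, ← h, S.star_star]
  · rintro rfl
    exact S.star_star _

lemma zero_ne_one_of_ne_zero {a : P} (ha : a ≠ S.zero) : S.zero ≠ S.one := fun h =>
  ha (le_antisymm (h ▸ S.le_one a) (S.zero_le a))

variable {S}

lemma Coherent.mono {α β : Set P} (hβ : S.Coherent β) (h : α ⊆ β) : S.Coherent α :=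
  fun a ha b hb => hβ a (h ha) b (h hb)

lemma Coherent.zero_notMem {α : Set P} (hα : S.Coherent α) : S.zero ∉ α :=
  fun h => hα _ h _ h (S.zero_le _)

lemma coherent_insert_iff {α : Set P} (hα : S.Coherent α) {a : P} :
    S.Coherent (insert a α) ↔ a ≠ S.zero ∧ ∀ b ∈ α, ¬ b ≤ S.star a := by
  constructor
  · intro h
    exact ⟨fun ha => h.zero_notMem (ha ▸ Set.mem_insert a α),
      fun b hb => h b (Set.mem_insert_of_mem a hb) a (Set.mem_insert a α)⟩
  · rintro ⟨ha0, hα'⟩ x hx y hy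
    rcases hx with rfl | hx <;> rcases hy with rfl | hy
    · exact fun h => ha0 (S.eq_zero_of_le_star _ h)
    · rw [S.le_star_comm]
      exact hα' y hy
    · exact hα' x hx
    · exact hα x hx y hy

lemma isVertex_iff {α : Set P} :
    S.IsVertex α ↔ S.Coherent α ∧ ∀ a, a ∈ α ∨ S.star a ∈ α := by
  refine ⟨fun ⟨hα, hsel⟩ => ⟨hα, fun a => ?_⟩, fun ⟨hα, hsel⟩ => ⟨hα, fun a => ⟨?_, ?_⟩⟩⟩
  · by_cases ha : a ∈ α
    · exact Or.inl ha
    · exact Or.inr (not_not.mp (mt (hsel a).mpr ha))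
  · exact fun ha hsa => hα a ha _ hsa (S.star_star a).ge
  · exact (hsel a).resolve_right

lemma isVertex_of_maximal (h01 : S.zero ≠ S.one) {v : Set P} (hv : Maximal S.Coherent v) :
    S.IsVertex v := by
  refine isVertex_iff.mpr ⟨hv.prop, fun a => ?_⟩
  by_contra! ⟨ha, hsa⟩
  have blocked : ∀ x ∉ v, x = S.zero ∨ ∃ b ∈ v, b ≤ S.star x := fun x hx => by
    by_contra! h
    exact hx (hv.mem_of_prop_insert ((coherent_insert_iff hv.prop).mpr h))
  rcases blocked a ha with ha0 | ⟨b, hb, hba⟩ <;>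
    rcases blocked (S.star a) hsa with h0 | ⟨c, hc, hca⟩
  · exact h01 (ha0 ▸ (S.star_eq_zero_iff).mp h0)
  · rw [S.star_star, ha0] at hca
    exact hv.prop.zero_notMem (le_antisymm hca (S.zero_le c) ▸ hc)
  · rw [h0] at hba
    exact hv.prop.zero_notMem (le_antisymm hba (S.zero_le b) ▸ hb)
  · rw [S.star_star] at hca
    exact hv.prop c hc b hb (hca.trans ((S.le_star_comm).mp hba))

lemma exists_isVertex_superset [Finite P] (h01 : S.zero ≠ S.one) {α : Set P}
    (hα : S.Coherent α) : ∃ v, S.IsVertex v ∧ α ⊆ v := by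
  obtain ⟨v, hαv, hv⟩ := Finite.exists_le_maximal hα
  exact ⟨v, isVertex_of_maximal h01 hv, hαv⟩

-- Putting `a*` into `v` for every `a < q` keeps every such `a` out of `v`.
lemma exists_isVertex_minimal_mem [Finite P] {q : P} (hq : S.Proper q) :
    ∃ v, S.IsVertex v ∧ Minimal (· ∈ v) q := by
  have hq1 : ¬ S.star q ≤ q := fun h =>
    hq.2 ((S.star_eq_zero_iff).mp (S.eq_zero_of_le_star _ (by rwa [S.star_star])))
  have hcoh : S.Coherent (insert q (S.star '' {a | a < q})) := by
    refine (coherent_insert_iff ?_).mpr ⟨hq.1, ?_⟩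
    · rintro _ ⟨a, ha, rfl⟩ _ ⟨b, hb, rfl⟩ h
      rw [S.star_star] at h
      exact hq1 ((S.star_anti _ _ ha.le).trans (h.trans hb.le))
    · rintro _ ⟨a, ha, rfl⟩ h
      exact ha.not_ge (by simpa only [S.star_star] using S.star_anti _ _ h)
  obtain ⟨v, hv, hsub⟩ := exists_isVertex_superset (S.zero_ne_one_of_ne_zero hq.1) hcoh
  refine ⟨v, hv, hsub (Set.mem_insert q _), fun a ha hle => ?_⟩
  by_contra hlt
  exact hv.1 a ha _ (hsub (Set.mem_insert_of_mem q ⟨a, lt_of_le_not_ge hle hlt, rfl⟩))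
    (S.star_star a).ge

lemma IsVertex.flip {v : Set P} (hv : S.IsVertex v) {q : P} (hq : Minimal (· ∈ v) q)
    (hq1 : q ≠ S.one) : S.IsVertex (insert (S.star q) (v \ {q})) := by
  obtain ⟨hcoh, hsel⟩ := isVertex_iff.mp hv
  refine isVertex_iff.mpr ⟨(coherent_insert_iff (hcoh.mono Set.sdiff_subset)).mpr
    ⟨fun h => hq1 ((S.star_eq_zero_iff).mp h), fun b ⟨hb, hbq⟩ hle => hbq ?_⟩, fun a => ?_⟩
  · rw [S.star_star] at hle
    exact le_antisymm hle (hq.2 hb hle)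
  · by_cases haq : a = q
    · exact Or.inr (Or.inl (haq ▸ rfl))
    by_cases hasq : a = S.star q
    · exact Or.inl (Or.inl hasq)
    rcases hsel a with ha | ha
    · exact Or.inl (Or.inr ⟨ha, haq⟩)
    · refine Or.inr (Or.inr ⟨ha, fun h => hasq ?_⟩)
      rw [← Set.mem_singleton_iff.mp h, S.star_star]

end PocSet

section Morphism

variable {P Q : Type*} [PartialOrder P] [PartialOrder Q] {S : PocSet P} {T : PocSet Q}
  {f : P → Q}

lemma IsPocMorphism.star_notMem_range (hf : IsPocMorphism S T f) {q : Q}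
    (hq : q ∉ Set.range f) : T.star q ∉ Set.range f := by
  rintro ⟨p, hp⟩
  exact hq ⟨S.star p, by rw [hf.2.2, hp, T.star_star]⟩

lemma IsPocMorphism.proper_of_notMem_range (hf : IsPocMorphism S T f) {q : Q}
    (hq : q ∉ Set.range f) : T.Proper q :=
  ⟨fun h => hq ⟨S.zero, hf.1.trans h.symm⟩,
    fun h => hq ⟨S.star S.zero, by rw [hf.2.2, hf.1, h, PocSet.one]⟩⟩

end Morphism

theorem stmt11_general {P Q : Type*} [PartialOrder P] [PartialOrder Q] [Finite Q]
    (S : PocSet P) (T : PocSet Q) (f : P → Q) (hf : IsPocMorphism S T f) :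
    Function.Surjective f ↔
      Set.InjOn (fun v : Set Q => f ⁻¹' v) {v : Set Q | T.IsVertex v} := by
  refine ⟨fun hsurj => (Set.preimage_injective.mpr hsurj).injOn, fun hinj => ?_⟩
  by_contra hsurj
  obtain ⟨q, hq⟩ : ∃ q, q ∉ Set.range f := not_forall.mp hsurj
  have hproper := hf.proper_of_notMem_range hq
  obtain ⟨v, hv, hqv⟩ := T.exists_isVertex_minimal_mem hproper
  have hpre : f ⁻¹' v = f ⁻¹' insert (T.star q) (v \ {q}) := by
    ext p
    have hpq : f p ≠ q := fun h => hq ⟨p, h⟩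
    have hpsq : f p ≠ T.star q := fun h => hf.star_notMem_range hq ⟨p, h⟩
    simp [hpq, hpsq]
  have hvw := hinj hv (hv.flip hqv hproper.2) hpre
  have hqw : q ∈ insert (T.star q) (v \ {q}) := hvw ▸ hqv.1
  rcases hqw with h | ⟨_, h⟩
  · exact hproper.1 (T.eq_zero_of_le_star q h.le)
  · exact h rfl

theorem stmt11 {P Q : Type*} [PartialOrder P] [PartialOrder Q] [Finite P] [Finite Q]
    (S : PocSet P) (T : PocSet Q) (f : P → Q) (hf : IsPocMorphism S T f) :
    Function.Surjective f ↔
      Set.InjOn (fun v : Set Q => f ⁻¹' v) {v : Set Q | T.IsVertex v} :=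
  stmt11_general S T f hf
end

section
/- In a finite median graph Γ = Γ(P) dual to a finite poc-set P, a set of vertices W is convex (closed under intervals: I(u,v) ⊆ W for all u,v ∈ W) if and only if W equals an intersection of halfspaces V(a) = {u ∈ VΓ(P) : a ∈ u}, a ∈ P. -/
/-!
Halfspaces are convex, because `z` lies between `u` and `v` exactly when `u ∩ v ⊆ z ⊆ u ∪ v`.
Conversely, let `W` be convex and let `z` lie in every halfspace containing `W`. Pick `u ∈ W`
nearest to `z`. The median of `u`, `v`, `z` lies between `u` and `v`, hence in `W`, and between
`u` and `z`, hence equals `u`; so `v ∩ z ⊆ u` for all `v ∈ W`, i.e. `u` is the gate of `z` in `W`.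
If `u ≠ z`, some `a ∈ z` misses `u`, hence misses every `v ∈ W`; then `V(a*)` contains `W` but
not `z`.
-/

theorem Set.ncard_symmDiff_add_two_mul_ncard_inter {α : Type*} [Finite α] (s t : Set α) :
    (symmDiff s t).ncard + 2 * (s ∩ t).ncard = s.ncard + t.ncard := by
  have hunion : (symmDiff s t).ncard + (s ∩ t).ncard = (s ∪ t).ncard :=
    (Set.ncard_union_eq (disjoint_symmDiff_inf s t)).symm.trans
      (congrArg Set.ncard (symmDiff_sup_inf s t))
  have := Set.ncard_union_add_ncard_inter s t
  omega

theorem Set.symmDiff_inter_symmDiff_eq_empty_iff {α : Type*} (s t u : Set α) :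
    symmDiff s u ∩ symmDiff u t = ∅ ↔ s ∩ t ⊆ u ∧ u ⊆ s ∪ t := by
  simp only [Set.eq_empty_iff_forall_notMem, Set.subset_def, Set.mem_inter_iff,
    Set.mem_union, Set.mem_symmDiff, ← forall_and]
  exact forall_congr' fun x => by tauto

-- As `(s Δ u) Δ (u Δ t) = s Δ t`, equality holds iff `s Δ u` and `u Δ t` are disjoint.
theorem Set.ncard_symmDiff_add_ncard_symmDiff_eq_iff {α : Type*} [Finite α] (s t u : Set α) :
    (symmDiff s u).ncard + (symmDiff u t).ncard = (symmDiff s t).ncard ↔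
      s ∩ t ⊆ u ∧ u ⊆ s ∪ t := by
  have h := Set.ncard_symmDiff_add_two_mul_ncard_inter (symmDiff s u) (symmDiff u t)
  rw [symmDiff_assoc, symmDiff_symmDiff_cancel_left] at h
  rw [← Set.symmDiff_inter_symmDiff_eq_empty_iff, ← Set.ncard_eq_zero]
  omega

namespace PocSet

variable {P : Type*}

theorem inter_subset_med_left (u v w : Set P) : u ∩ v ⊆ med u v w :=
  fun _ hx => Or.inl (Or.inl hx)

theorem med_subset_union_left (u v w : Set P) : med u v w ⊆ u ∪ v := by
  rintro x ((hx | hx) | hx)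
  exacts [Or.inl hx.1, Or.inr hx.1, Or.inl hx.1]

theorem inter_subset_med_right (u v w : Set P) : u ∩ w ⊆ med u v w :=
  fun _ hx => Or.inr hx

theorem med_subset_union_right (u v w : Set P) : med u v w ⊆ u ∪ w := by
  rintro x ((hx | hx) | hx)
  exacts [Or.inl hx.1, Or.inr hx.2, Or.inl hx.1]

variable [PartialOrder P] (S : PocSet P)

abbrev Vertex : Type _ := {α : Set P // S.IsVertex α}

def halfspace (a : P) : Set S.Vertex := {u | a ∈ u.1}

def IsConvex (W : Set S.Vertex) : Prop :=
  ∀ u ∈ W, ∀ v ∈ W, ∀ z : S.Vertex, S.delta u.1 z.1 + S.delta z.1 v.1 = S.delta u.1 v.1 → z ∈ W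

variable {S}

theorem delta_add_delta_eq_iff [Finite P] (u v z : Set P) :
    S.delta u z + S.delta z v = S.delta u v ↔ u ∩ v ⊆ z ∧ z ⊆ u ∪ v := by
  rw [← Set.ncard_symmDiff_add_ncard_symmDiff_eq_iff, delta, delta, delta, ← add_div,
    div_left_inj' two_ne_zero]
  exact_mod_cast Iff.rfl

theorem delta_nonneg (u v : Set P) : 0 ≤ S.delta u v := by
  unfold delta
  positivity

theorem delta_eq_zero_iff [Finite P] {u v : Set P} : S.delta u v = 0 ↔ u = v := by
  rw [delta, div_eq_zero_iff, Nat.cast_eq_zero, Set.ncard_eq_zero, ← Set.bot_eq_empty,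
    symmDiff_eq_bot]
  simp

namespace IsVertex

variable {α β γ : Set P}

theorem zero_notMem (hα : S.IsVertex α) : S.zero ∉ α :=
  fun h => hα.1 _ h _ h (S.zero_le _)

theorem star_mem_iff (hα : S.IsVertex α) (a : P) : S.star a ∈ α ↔ a ∉ α := by
  rw [hα.2 a, not_not]

theorem med (hα : S.IsVertex α) (hβ : S.IsVertex β) (hγ : S.IsVertex γ) :
    S.IsVertex (PocSet.med α β γ) := by
  constructor
  · intro a ha b hb hab
    simp only [PocSet.med, Set.mem_union, Set.mem_inter_iff] at ha hb
    have hcommon : (a ∈ α ∧ b ∈ α) ∨ (a ∈ β ∧ b ∈ β) ∨ (a ∈ γ ∧ b ∈ γ) := by tauto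
    rcases hcommon with ⟨ha, hb⟩ | ⟨ha, hb⟩ | ⟨ha, hb⟩
    exacts [hα.1 a ha b hb hab, hβ.1 a ha b hb hab, hγ.1 a ha b hb hab]
  · intro a
    have := hα.2 a
    have := hβ.2 a
    have := hγ.2 a
    simp only [PocSet.med, Set.mem_union, Set.mem_inter_iff]
    tauto

theorem exists_mem_notMem_of_ne (hα : S.IsVertex α) (hβ : S.IsVertex β) (hne : α ≠ β) :
    ∃ a ∈ β, a ∉ α := by
  by_contra! h
  refine hne (Set.Subset.antisymm (fun a ha => ?_) h)
  by_contra hb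
  exact (hα.star_mem_iff a).mp (h _ ((hβ.star_mem_iff a).mpr hb)) ha

end IsVertex

theorem isConvex_biInter_halfspace [Finite P] (A : Set P) :
    S.IsConvex (⋂ a ∈ A, S.halfspace a) := by
  intro u hu v hv z hz
  simp only [halfspace, Set.mem_iInter] at hu hv ⊢
  exact fun a ha => ((delta_add_delta_eq_iff _ _ _).mp hz).1 ⟨hu a ha, hv a ha⟩

namespace IsConvex

variable [Finite P] {W : Set S.Vertex}

theorem inter_subset_of_forall_delta_le (hW : S.IsConvex W) {u z : S.Vertex} (hu : u ∈ W)
    (hmin : ∀ v ∈ W, S.delta u.1 z.1 ≤ S.delta v.1 z.1) {v : S.Vertex} (hv : v ∈ W) :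
    v.1 ∩ z.1 ⊆ u.1 := by
  let m : S.Vertex := ⟨med u.1 v.1 z.1, u.2.med v.2 z.2⟩
  have hmW : m ∈ W := hW u hu v hv m <| (delta_add_delta_eq_iff _ _ _).mpr
    ⟨inter_subset_med_left _ _ _, med_subset_union_left _ _ _⟩
  have hsplit : S.delta u.1 m.1 + S.delta m.1 z.1 = S.delta u.1 z.1 :=
    (delta_add_delta_eq_iff _ _ _).mpr
      ⟨inter_subset_med_right _ _ _, med_subset_union_right _ _ _⟩
  have hum : u.1 = m.1 := delta_eq_zero_iff.mp <|
    le_antisymm (by linarith [hmin m hmW]) (delta_nonneg _ _)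
  rw [hum]
  exact fun x hx => Or.inl (Or.inr hx)

theorem mem_of_forall_mem_halfspace (hW : S.IsConvex W) {z : S.Vertex}
    (hz : ∀ a, W ⊆ S.halfspace a → z ∈ S.halfspace a) : z ∈ W := by
  rcases W.eq_empty_or_nonempty with rfl | hne
  · exact absurd (hz S.zero (Set.empty_subset _)) z.2.zero_notMem
  obtain ⟨u, hu, hmin⟩ := Set.exists_min_image W (fun v => S.delta v.1 z.1) W.toFinite hne
  by_cases huz : u = z
  · exact huz ▸ hu
  obtain ⟨a, haz, hau⟩ := u.2.exists_mem_notMem_of_ne z.2 (Subtype.coe_injective.ne huz)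
  have hstar : W ⊆ S.halfspace (S.star a) := fun v hv =>
    (v.2.star_mem_iff a).mpr fun hav => hau (hW.inter_subset_of_forall_delta_le hu hmin hv ⟨hav, haz⟩)
  exact ((z.2.star_mem_iff a).mp (hz _ hstar) haz).elim

theorem eq_biInter_halfspace (hW : S.IsConvex W) :
    W = ⋂ a ∈ {a | W ⊆ S.halfspace a}, S.halfspace a := by
  refine Set.Subset.antisymm (fun u hu => Set.mem_biInter fun a ha => ha hu) fun z hz => ?_
  exact hW.mem_of_forall_mem_halfspace fun a ha => Set.mem_iInter₂.mp hz a ha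

end IsConvex

end PocSet

theorem stmt17 {P : Type*} [PartialOrder P] [Finite P] (S : PocSet P)
    (W : Set {α : Set P // S.IsVertex α}) :
    (∀ u ∈ W, ∀ v ∈ W, ∀ z : {α : Set P // S.IsVertex α},
        S.delta u.1 z.1 + S.delta z.1 v.1 = S.delta u.1 v.1 → z ∈ W) ↔
      ∃ A : Set P, W = ⋂ a ∈ A, {u : {α : Set P // S.IsVertex α} | a ∈ u.1} := by
  change S.IsConvex W ↔ ∃ A : Set P, W = ⋂ a ∈ A, S.halfspace a
  exact ⟨fun hW => ⟨_, hW.eq_biInter_halfspace⟩,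
    fun ⟨A, hA⟩ => hA ▸ PocSet.isConvex_biInter_halfspace A⟩
end
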